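/- arXiv:2101.00437 — 5 statements merged into one kernel-verified Lean document; each statement's English description precedes it below -/
import Mathlib

section
/- Let M be a median algebra. For all x, y, z in M, y lies in the interval [x, z] if and only if the intersection of the intervals [x, y] and [y, z] equals {y}. -/
def MedInterval {M : Type*} (m : M → M → M → M) (x y : M) : Set M := {u | m x y u = u}

def IsMedian {M : Type*} (m : M → M → M → M) : Prop :=
  (∀ x y z, m x y z = m x z y) ∧ (∀ x y z, m x y z = m y x z) ∧
  (∀ x y, m x x y = x) ∧
  (∀ x y z u v, m (m x y z) u v = m x (m y u v) (m z u v))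

/-!
The median `m x y z` always lies in both `[x, y]` and `[y, z]`; so if their intersection is `{y}`,
then `m x z y = y`, i.e. `y ∈ [x, z]`. Conversely, for `y ∈ [x, z]` one distributivity step shows
that any `u` in both intervals equals `y`.
-/

namespace IsMedian

variable {M : Type*} {m : M → M → M → M}

theorem rotate (hm : IsMedian m) (a b c : M) : m a b c = m c a b := by
  rw [hm.2.1, hm.1, hm.2.1, hm.1]

theorem left_mem_medInterval (hm : IsMedian m) (x y : M) : x ∈ MedInterval m x y :=
  (hm.rotate x y x).trans (hm.2.2.1 x y)

theorem right_mem_medInterval (hm : IsMedian m) (x y : M) : y ∈ MedInterval m x y :=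
  (hm.rotate y y x).symm.trans (hm.2.2.1 y x)

theorem median_mem_medInterval (hm : IsMedian m) (x y z : M) : m x y z ∈ MedInterval m x y := by
  have h := hm.2.2.2 z x y x y
  rw [hm.2.2.1, (hm.left_mem_medInterval y x : m y x y = y)] at h
  change m x y (m x y z) = m x y z
  rw [hm.rotate x y z, hm.rotate x y (m z x y)]
  exact h

-- Distributivity expands `m (m y z u) x y` as `m y (m z x y) (m u x y)`, which collapses to `y`.
theorem medInterval_inter_subset_singleton (hm : IsMedian m) {x y z : M}
    (hy : y ∈ MedInterval m x z) : MedInterval m x y ∩ MedInterval m y z ⊆ {y} := by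
  rintro u ⟨hxy : m x y u = u, hyz : m y z u = u⟩
  have h := hm.2.2.2 y z u x y
  rw [hyz, ← hm.rotate x y u, hxy, hm.2.1 z x y, hy, hm.2.2.1] at h
  exact h

end IsMedian

theorem stmt1 {M : Type*} (m : M → M → M → M) (hm : IsMedian m)
    (x y z : M) :
    y ∈ MedInterval m x z ↔ MedInterval m x y ∩ MedInterval m y z = {y} := by
  constructor
  · intro hy
    refine (hm.medInterval_inter_subset_singleton hy).antisymm ?_
    exact Set.singleton_subset_iff.2 ⟨hm.right_mem_medInterval x y, hm.left_mem_medInterval y z⟩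
  · intro h
    have hmed : m x y z ∈ MedInterval m x y ∩ MedInterval m y z := by
      refine ⟨hm.median_mem_medInterval x y z, ?_⟩
      rw [← hm.rotate]
      exact hm.median_mem_medInterval y z x
    rw [h, Set.mem_singleton_iff, hm.1] at hmed
    exact hmed
end

section
/- Let M be a median algebra and let C₁, ..., Cₙ be convex subsets of M such that Cᵢ ∩ Cⱼ ≠ ∅ for all i ≠ j. Then the full intersection C₁ ∩ ... ∩ Cₙ is nonempty (Helly's theorem for median algebras). -/
def MedConvex {M : Type*} (m : M → M → M → M) (C : Set M) : Prop :=
  ∀ x ∈ C, ∀ y ∈ C, MedInterval m x y ⊆ C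

theorem MedConvex.inter {M : Type*} {m : M → M → M → M} {A B : Set M}
    (hA : MedConvex m A) (hB : MedConvex m B) : MedConvex m (A ∩ B) :=
  fun x hx y hy _ hu => ⟨hA x hx.1 y hy.1 hu, hB x hx.2 y hy.2 hu⟩

namespace IsMedian

variable {M : Type*} {m : M → M → M → M}

theorem mem_medInterval_right (hm : IsMedian m) (a b c : M) : m a b c ∈ MedInterval m b c := by
  obtain ⟨swap23, swap12, idem, distrib⟩ := hm
  show m b c (m a b c) = m a b c
  calc m b c (m a b c) = m (m a b c) b c := by
        rw [swap12, swap23, swap12 c, swap23]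
    _ = m a (m b b c) (m c b c) := distrib a b c b c
    _ = m a b c := by rw [swap23 c b c, idem, idem]

theorem mem_medInterval_mid (hm : IsMedian m) (a b c : M) : m a b c ∈ MedInterval m a c := by
  rw [hm.2.1]
  exact hm.mem_medInterval_right b a c

theorem mem_medInterval_left (hm : IsMedian m) (a b c : M) : m a b c ∈ MedInterval m a b := by
  rw [hm.1, hm.2.1]
  exact hm.mem_medInterval_right c a b

theorem helly_three (hm : IsMedian m) {A B D : Set M}
    (hA : MedConvex m A) (hB : MedConvex m B) (hD : MedConvex m D)
    (hAB : (A ∩ B).Nonempty) (hAD : (A ∩ D).Nonempty) (hBD : (B ∩ D).Nonempty) :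
    (A ∩ B ∩ D).Nonempty := by
  obtain ⟨a, haB, haD⟩ := hBD
  obtain ⟨b, hbA, hbD⟩ := hAD
  obtain ⟨c, hcA, hcB⟩ := hAB
  exact ⟨m a b c, ⟨hA b hbA c hcA (hm.mem_medInterval_right a b c),
    hB a haB c hcB (hm.mem_medInterval_mid a b c)⟩, hD a haD b hbD (hm.mem_medInterval_left a b c)⟩

theorem helly_finset (hm : IsMedian m) {ι : Type*} {s : Finset ι} (hs : s.Nonempty)
    {C : ι → Set M} (hconv : ∀ i ∈ s, MedConvex m (C i)) (hne : ∀ i ∈ s, (C i).Nonempty)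
    (hpair : (s : Set ι).Pairwise fun i j => (C i ∩ C j).Nonempty) :
    (⋂ i ∈ s, C i).Nonempty := by
  induction hs using Finset.Nonempty.cons_induction generalizing C with
  | singleton a => simpa using hne a (Finset.mem_singleton_self a)
  | cons a s ha hs ih =>
    have hconv_a := hconv a (Finset.mem_cons_self a s)
    have hpair_a : ∀ i ∈ s, (C i ∩ C a).Nonempty := fun i hi =>
      hpair (Finset.mem_cons_of_mem hi) (Finset.mem_cons_self a s) (ne_of_mem_of_not_mem hi ha)
    have hpair' : (s : Set ι).Pairwise fun i j => ((C i ∩ C a) ∩ (C j ∩ C a)).Nonempty := by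
      intro i hi j hj hij
      obtain ⟨y, ⟨hyi, hyj⟩, hya⟩ := hm.helly_three (hconv i (Finset.mem_cons_of_mem hi))
        (hconv j (Finset.mem_cons_of_mem hj)) hconv_a
        (hpair (Finset.mem_cons_of_mem hi) (Finset.mem_cons_of_mem hj) hij)
        (hpair_a i hi) (hpair_a j hj)
      exact ⟨y, ⟨hyi, hya⟩, hyj, hya⟩
    obtain ⟨x, hx⟩ := ih (C := fun i => C i ∩ C a)
      (fun i hi => (hconv i (Finset.mem_cons_of_mem hi)).inter hconv_a) hpair_a hpair'
    simp only [Set.mem_iInter] at hx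
    obtain ⟨i₀, hi₀⟩ := hs
    refine ⟨x, Set.mem_iInter₂.2 fun i hi => ?_⟩
    rcases Finset.mem_cons.1 hi with rfl | hi
    · exact (hx i₀ hi₀).2
    · exact (hx i hi).1

end IsMedian

/-- Helly's theorem for median algebras. -/
theorem stmt4 {M : Type*} (m : M → M → M → M) (hm : IsMedian m)
    (n : ℕ) (hn : 0 < n) (C : Fin n → Set M) (hconv : ∀ i, MedConvex m (C i))
    (hne : ∀ i, (C i).Nonempty)
    (hpair : ∀ i j, i ≠ j → (C i ∩ C j).Nonempty) :
    (⋂ i, C i).Nonempty := by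
  have hfin : (Finset.univ : Finset (Fin n)).Nonempty := Finset.univ_nonempty_iff.2 ⟨⟨0, hn⟩⟩
  simpa using hm.helly_finset hfin (fun i _ => hconv i) (fun i _ => hne i)
    (fun i _ j _ hij => hpair i j hij)
end

section
/- Let M be a median algebra, and let A, B ⊆ M be disjoint nonempty subsets with A gate-convex. Then there exists a ∈ A such that the set of half-spaces separating A from B equals the set of half-spaces separating {a} from B. Specifically, if b ∈ B and a is the gate of b in A, then every half-space containing a and disjoint from B also contains A. -/
def IsHalfSpace {M : Type*} (m : M → M → M → M) (h : Set M) : Prop :=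
  MedConvex m h ∧ MedConvex m hᶜ ∧ hᶜ.Nonempty

def IsGate {M : Type*} (m : M → M → M → M) (C : Set M) (x y : M) : Prop :=
  y ∈ C ∧ ∀ z ∈ C, y ∈ MedInterval m x z

def GateConvex {M : Type*} (m : M → M → M → M) (C : Set M) : Prop :=
  ∀ x : M, ∃ y : M, IsGate m C x y

/-- If `x ∈ A` were outside `h`, the gate `a ∈ [b, x]` would lie in the convex set `hᶜ`,
which contains both `b` and `x`. -/
lemma IsGate.subset_of_medConvex_compl {M : Type*} {m : M → M → M → M} {A h : Set M} {b a : M}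
    (hg : IsGate m A b a) (hconv : MedConvex m hᶜ) (hb : b ∉ h) (ha : a ∈ h) : A ⊆ h := by
  intro x hx
  by_contra hxh
  exact hconv b hb x hxh (hg.2 x hx) ha

lemma IsGate.separating_eq {M : Type*} {m : M → M → M → M} {A B : Set M} {b a : M}
    (hb : b ∈ B) (hg : IsGate m A b a) :
    {h : Set M | IsHalfSpace m h ∧ A ⊆ h ∧ B ⊆ hᶜ} =
      {h : Set M | IsHalfSpace m h ∧ a ∈ h ∧ B ⊆ hᶜ} := by
  ext h
  constructor
  · rintro ⟨hh, hAh, hBh⟩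
    exact ⟨hh, hAh hg.1, hBh⟩
  · rintro ⟨hh, hah, hBh⟩
    exact ⟨hh, hg.subset_of_medConvex_compl hh.2.1 (hBh hb) hah, hBh⟩

theorem stmt5_general {M : Type*} (m : M → M → M → M)
    (A B : Set M) (hB : B.Nonempty)
    (hgc : GateConvex m A) :
    (∃ a ∈ A, {h : Set M | IsHalfSpace m h ∧ A ⊆ h ∧ B ⊆ hᶜ} =
        {h : Set M | IsHalfSpace m h ∧ a ∈ h ∧ B ⊆ hᶜ}) ∧
    (∀ b ∈ B, ∀ a : M, IsGate m A b a →
      ∀ h : Set M, IsHalfSpace m h → a ∈ h → B ⊆ hᶜ → A ⊆ h) := by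
  obtain ⟨b, hb⟩ := hB
  obtain ⟨a, hg⟩ := hgc b
  refine ⟨⟨a, hg.1, hg.separating_eq hb⟩, ?_⟩
  intro b' hb' a' hg' h hh ha' hBh
  exact hg'.subset_of_medConvex_compl hh.2.1 (hBh hb') ha'

theorem stmt5 {M : Type*} (m : M → M → M → M) (hm : IsMedian m)
    (A B : Set M) (hAB : Disjoint A B) (hA : A.Nonempty) (hB : B.Nonempty)
    (hgc : GateConvex m A) :
    (∃ a ∈ A, {h : Set M | IsHalfSpace m h ∧ A ⊆ h ∧ B ⊆ hᶜ} =
        {h : Set M | IsHalfSpace m h ∧ a ∈ h ∧ B ⊆ hᶜ}) ∧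
    (∀ b ∈ B, ∀ a : M, IsGate m A b a →
      ∀ h : Set M, IsHalfSpace m h → a ∈ h → B ⊆ hᶜ → A ⊆ h) :=
  stmt5_general m A B hB hgc
end

section
/- Let μ be a balanced probability measure on the finite cube M = {0,1}ⁿ (with coordinatewise majority median) such that μ is fully supported (every point has positive measure). Then μ is the uniform measure: μ(x) = 1/2ⁿ for every x ∈ M. -/
/-!
Forgetting a coordinate commutes with the majority, so it maps balanced, fully supported
probability measures to balanced, fully supported ones. By induction on `n` all these marginals
are uniform, that is `μ {x} + μ {x + eᵢ} = 2⁻⁽ⁿ⁻¹⁾`. Then `χ x * (μ {x} - 2⁻ⁿ)` is invariant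
under every `eᵢ`, where `χ = cubeSign` is the parity character, so `μ {x} = s + δ χ x` with
`s = 2⁻ⁿ`. Because the majority acts coordinatewise, the sums of `χ`-monomials over the fibre
`maj3⁻¹ {0}` factor over the coordinates, and balance at `0` becomes
`s + δ = s³ 4ⁿ + 3 s² δ 2ⁿ + δ³ (-2)ⁿ`. Together with `|δ| < s` (positivity) this cubic has no
solution with `δ ≠ 0`.
-/

open MeasureTheory

noncomputable def selfMedian {M : Type*} [MeasurableSpace M] (m : M → M → M → M)
    (μ : Measure M) : Measure M :=
  Measure.map (fun p : M × M × M => m p.1 p.2.1 p.2.2) (μ.prod (μ.prod μ))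

/-- The coordinatewise majority (median) operation on the finite cube `{0,1}ⁿ`. -/
def maj3 {n : ℕ} (x y z : Fin n → ZMod 2) : Fin n → ZMod 2 :=
  fun i => x i * y i + y i * z i + x i * z i

open Finset

section SelfMedian

variable {M N : Type*} [MeasurableSpace M] [MeasurableSpace N]

theorem selfMedian_map {m : M → M → M → M} {m' : N → N → N → N} {f : M → N}
    (hf : Measurable f) (hm : Measurable fun p : M × M × M => m p.1 p.2.1 p.2.2)
    (hm' : Measurable fun p : N × N × N => m' p.1 p.2.1 p.2.2)
    (hfm : ∀ x y z, f (m x y z) = m' (f x) (f y) (f z)) (μ : Measure M) [SFinite μ] :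
    selfMedian m' (μ.map f) = (selfMedian m μ).map f := by
  rw [selfMedian, selfMedian, Measure.map_prod_map _ _ hf hf,
    Measure.map_prod_map _ _ hf (hf.prodMap hf), Measure.map_map hm' (hf.prodMap (hf.prodMap hf)),
    Measure.map_map hf hm]
  congr 1
  funext p
  exact (hfm _ _ _).symm

theorem selfMedian_apply_singleton [Fintype M] [DecidableEq M] [MeasurableSingletonClass M]
    (m : M → M → M → M) (μ : Measure M) [SFinite μ] (x : M) :
    selfMedian m μ {x} =
      ∑ p : M × M × M with m p.1 p.2.1 p.2.2 = x, μ {p.1} * (μ {p.2.1} * μ {p.2.2}) := by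
  have hfiber : (fun p : M × M × M => m p.1 p.2.1 p.2.2) ⁻¹' {x} =
      ↑({p | m p.1 p.2.1 p.2.2 = x} : Finset (M × M × M)) := by
    ext; simp
  rw [selfMedian, Measure.map_apply (measurable_of_countable _) (measurableSet_singleton x),
    hfiber, ← sum_measure_singleton]
  refine sum_congr rfl fun p _ => ?_
  rw [← Set.singleton_prod_singleton, Measure.prod_prod, ← Set.singleton_prod_singleton,
    Measure.prod_prod]

end SelfMedian

theorem ZMod.eq_or_eq_add_one (a b : ZMod 2) : a = b ∨ a = b + 1 := by
  revert a b; decide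

theorem ZMod.sum_univ_two {M : Type*} [AddCommMonoid M] (f : ZMod 2 → M) :
    ∑ a, f a = f 0 + f 1 :=
  Fin.sum_univ_two f

theorem Fin.preimage_removeNth_singleton {n : ℕ} (i : Fin (n + 1)) (x : Fin (n + 1) → ZMod 2) :
    Fin.removeNth (α := fun _ => ZMod 2) i ⁻¹' {i.removeNth x} = {x, x + Pi.single i 1} := by
  ext z
  simp only [Set.mem_preimage, Set.mem_singleton_iff, Set.mem_insert_iff, funext_iff,
    Pi.add_apply, Fin.removeNth]
  constructor
  · intro h
    have hoff : ∀ j ≠ i, z j = x j := fun j hj => by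
      obtain ⟨k, rfl⟩ := Fin.exists_succAbove_eq hj
      exact h k
    rcases ZMod.eq_or_eq_add_one (z i) (x i) with hi | hi
    · left; intro j; rcases eq_or_ne j i with rfl | hj
      · exact hi
      · exact hoff j hj
    · right; intro j; rcases eq_or_ne j i with rfl | hj
      · simpa using hi
      · simp [hoff j hj, Pi.single_eq_of_ne hj]
  · rintro (h | h) k
    · exact h _
    · simp [h]

section Sign

variable {n : ℕ}

def ZMod.twoSign (a : ZMod 2) : ℝ := if a = 0 then 1 else -1

def cubeSign (x : Fin n → ZMod 2) : ℝ := ∏ i, (x i).twoSign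

theorem cubeSign_zero : cubeSign (0 : Fin n → ZMod 2) = 1 := by
  simp [cubeSign, ZMod.twoSign]

theorem cubeSign_mul_self (x : Fin n → ZMod 2) : cubeSign x * cubeSign x = 1 := by
  rw [cubeSign, ← prod_mul_distrib]
  exact prod_eq_one fun i _ => by unfold ZMod.twoSign; split_ifs <;> norm_num

theorem cubeSign_add_single (x : Fin n → ZMod 2) (i : Fin n) :
    cubeSign (x + Pi.single i 1) = -cubeSign x := by
  have hflip : ∀ a : ZMod 2, (a + 1).twoSign = -a.twoSign := by
    have h : ∀ a : ZMod 2, a + 1 = 0 ↔ a ≠ 0 := by decide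
    intro a; unfold ZMod.twoSign; split_ifs <;> simp_all
  rw [cubeSign, cubeSign, Fintype.prod_eq_mul_prod_compl i, Fintype.prod_eq_mul_prod_compl i,
    prod_congr rfl fun j hj => by rw [Pi.add_apply, Pi.single_eq_of_ne (by simpa using hj), add_zero]]
  simp [hflip]

theorem sum_maj3_eq_zero_prod (F G H : ZMod 2 → ℝ) :
    ∑ P : (Fin n → ZMod 2) × _ × _ with maj3 P.1 P.2.1 P.2.2 = 0,
      (∏ i, F (P.1 i)) * ((∏ i, G (P.2.1 i)) * ∏ i, H (P.2.2 i)) =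
    (∑ t : ZMod 2 × ZMod 2 × ZMod 2 with t.1 * t.2.1 + t.2.1 * t.2.2 + t.1 * t.2.2 = 0,
      F t.1 * (G t.2.1 * H t.2.2)) ^ n := by
  rw [sum_filter, sum_filter, sum_pow', Fintype.piFinset_univ,
    ← ((Equiv.arrowProdEquivProdArrow _ _ _).trans ((Equiv.refl _).prodCongr
      (Equiv.arrowProdEquivProdArrow _ _ _))).sum_comp]
  refine sum_congr rfl fun T _ => ?_
  simp [Fintype.prod_ite_zero, funext_iff, maj3, ← prod_mul_distrib]

theorem sum_maj3_eq_zero_cubeSign_pow (a b c : ℕ) :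
    ∑ P : (Fin n → ZMod 2) × _ × _ with maj3 P.1 P.2.1 P.2.2 = 0,
      cubeSign P.1 ^ a * (cubeSign P.2.1 ^ b * cubeSign P.2.2 ^ c) =
    (1 + (-1) ^ a + (-1) ^ b + (-1) ^ c) ^ n := by
  have h := sum_maj3_eq_zero_prod (n := n) (fun t : ZMod 2 => t.twoSign ^ a)
    (fun t => t.twoSign ^ b) (fun t => t.twoSign ^ c)
  simp only [prod_pow] at h
  simp only [cubeSign, h]
  congr 1
  simp [sum_filter, Fintype.sum_prod_type, ZMod.twoSign, ZMod.sum_univ_two,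
    show (1 + 1 + 1 : ZMod 2) ≠ 0 by decide]
  ring

theorem eq_add_cubeSign_mul_of_add_single {w : (Fin n → ZMod 2) → ℝ} {s : ℝ}
    (hflip : ∀ x i, w x + w (x + Pi.single i 1) = 2 * s) (x : Fin n → ZMod 2) :
    w x = s + cubeSign x * (w 0 - s) := by
  set g : (Fin n → ZMod 2) → ℝ := fun x => cubeSign x * (w x - s)
  have hsingle : ∀ i (b : ZMod 2), Function.Periodic g (Pi.single i b) := by
    intro i b y
    rcases ZMod.eq_or_eq_add_one b 0 with rfl | rfl
    · simp
    · simp only [g, zero_add, cubeSign_add_single]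
      linear_combination (-cubeSign y) * hflip y i
  have hx : Function.Periodic g x := by
    rw [← univ_sum_single x]
    exact sum_induction _ _ (fun _ _ => Function.Periodic.add_period) (fun _ => by simp)
      fun i _ => hsingle i (x i)
  have h0 := hx 0
  simp only [g, zero_add, cubeSign_zero, one_mul] at h0
  rw [← h0, ← mul_assoc, cubeSign_mul_self]
  ring

theorem sum_maj3_eq_zero_of_eq_add_cubeSign_mul (hn : n ≠ 0) {w : (Fin n → ZMod 2) → ℝ}
    {s δ : ℝ} (hw : ∀ x, w x = s + cubeSign x * δ) :
    ∑ P : (Fin n → ZMod 2) × _ × _ with maj3 P.1 P.2.1 P.2.2 = 0, w P.1 * (w P.2.1 * w P.2.2) =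
      s ^ 3 * 4 ^ n + 3 * s ^ 2 * δ * 2 ^ n + δ ^ 3 * (-2) ^ n := by
  -- exponents `0` and `1` are kept so that each term has the shape of
  -- `sum_maj3_eq_zero_cubeSign_pow`
  have expand : ∀ a b c : ℝ, (s + a * δ) * ((s + b * δ) * (s + c * δ)) =
      s ^ 3 * (a ^ 0 * (b ^ 0 * c ^ 0)) + s ^ 2 * δ * (a ^ 1 * (b ^ 0 * c ^ 0)) +
      s ^ 2 * δ * (a ^ 0 * (b ^ 1 * c ^ 0)) + s ^ 2 * δ * (a ^ 0 * (b ^ 0 * c ^ 1)) +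
      s * δ ^ 2 * (a ^ 1 * (b ^ 1 * c ^ 0)) + s * δ ^ 2 * (a ^ 1 * (b ^ 0 * c ^ 1)) +
      s * δ ^ 2 * (a ^ 0 * (b ^ 1 * c ^ 1)) + δ ^ 3 * (a ^ 1 * (b ^ 1 * c ^ 1)) := by
    intros; ring
  simp only [hw, expand, sum_add_distrib, ← mul_sum, sum_maj3_eq_zero_cubeSign_pow]
  norm_num [hn]
  ring

theorem eq_zero_of_cubic_eq {n : ℕ} {s δ : ℝ} (hn : n ≠ 0) (hs : s * 2 ^ n = 1) (hδ : |δ| < s)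
    (h : s + δ = s ^ 3 * 4 ^ n + 3 * s ^ 2 * δ * 2 ^ n + δ ^ 3 * (-2) ^ n) : δ = 0 := by
  by_contra hδ0
  set t : ℝ := 2 ^ n with ht
  obtain ⟨e, he, hneg⟩ : ∃ e : ℝ, e ^ 2 = 1 ∧ (-2 : ℝ) ^ n = e * t :=
    ⟨(-1) ^ n, by rw [← pow_mul, mul_comm, pow_mul, neg_one_sq, one_pow], by rw [neg_pow]⟩
  have h4 : (4 : ℝ) ^ n = t ^ 2 := by rw [ht, ← pow_mul, mul_comm, pow_mul]; norm_num
  rw [h4, hneg] at h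
  -- `t * h`, simplified with `s * t = 1`, is `δ * (t - 3) = δ * e * (δ * t) ^ 2`
  have key : e * (δ * t) ^ 2 = t - 3 := by
    apply mul_left_cancel₀ hδ0
    linear_combination (-t) * h - (1 + s * t) * (s * t + 3 * δ) * hs
  have hsmall : (δ * t) ^ 2 < 1 := by
    calc (δ * t) ^ 2 = δ ^ 2 * t ^ 2 := by ring
      _ < s ^ 2 * t ^ 2 :=
        mul_lt_mul_of_pos_right (sq_lt_sq' (abs_lt.1 hδ).1 (abs_lt.1 hδ).2) (by positivity)
      _ = 1 := by rw [← mul_pow, hs, one_pow]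
  have hmid : 2 < t ∧ t < 4 := by
    have : (t - 3) ^ 2 < 1 := by
      rw [← key, mul_pow, he, one_mul]
      nlinarith [sq_nonneg (δ * t)]
    constructor <;> nlinarith
  obtain ⟨m, rfl⟩ := Nat.exists_eq_succ_of_ne_zero hn
  have : (1 : ℝ) < 2 ^ m ∧ (2 : ℝ) ^ m < 2 := by
    rw [ht, pow_succ] at hmid; constructor <;> linarith [hmid.1, hmid.2]
  have h' : 1 < 2 ^ m ∧ 2 ^ m < 2 := by exact_mod_cast this
  omega

theorem eq_one_div_two_pow_of_add_single {n : ℕ} {w : (Fin (n + 1) → ZMod 2) → ℝ}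
    (hpos : ∀ x, 0 < w x) (hflip : ∀ x i, w x + w (x + Pi.single i 1) = 1 / 2 ^ n)
    (hbal : ∑ P : (Fin (n + 1) → ZMod 2) × _ × _ with maj3 P.1 P.2.1 P.2.2 = 0,
      w P.1 * (w P.2.1 * w P.2.2) = w 0) (x : Fin (n + 1) → ZMod 2) :
    w x = 1 / 2 ^ (n + 1) := by
  set s : ℝ := 1 / 2 ^ (n + 1)
  have hs : s * 2 ^ (n + 1) = 1 := by simp [s]
  have hflip' : ∀ x i, w x + w (x + Pi.single i 1) = 2 * s := fun x i => by
    rw [hflip]; field_simp; linear_combination -hs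
  have hrep := eq_add_cubeSign_mul_of_add_single hflip'
  have hδ : |w 0 - s| < s := abs_sub_lt_iff.2
    ⟨by linarith [hpos (0 + Pi.single 0 1), hflip' 0 0], by linarith [hpos 0]⟩
  have hδ0 := eq_zero_of_cubic_eq (Nat.succ_ne_zero n) hs hδ (by
    rw [← sum_maj3_eq_zero_of_eq_add_cubeSign_mul (Nat.succ_ne_zero n) hrep, hbal]; ring)
  rw [hrep x, hδ0, mul_zero, add_zero]

theorem measure_add_single_eq_of_map_removeNth {n : ℕ} {μ : Measure (Fin (n + 1) → ZMod 2)}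
    {c : ENNReal} {i : Fin (n + 1)} (hmarg : ∀ y, μ.map (Fin.removeNth i) {y} = c)
    (x : Fin (n + 1) → ZMod 2) :
    μ {x} + μ {x + Pi.single i 1} = c := by
  have hne : x ≠ x + Pi.single i 1 := by simp
  rw [← hmarg (i.removeNth x), Measure.map_apply (measurable_of_countable _)
    (measurableSet_singleton _), Fin.preimage_removeNth_singleton, Set.insert_eq,
    measure_union (Set.disjoint_singleton.2 hne) (measurableSet_singleton _)]

theorem measure_singleton_eq_of_add_single {n : ℕ} (μ : Measure (Fin (n + 1) → ZMod 2))
    [IsFiniteMeasure μ] (hbal : selfMedian maj3 μ = μ) (hfull : ∀ x, 0 < μ {x})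
    (hflip : ∀ x i, μ {x} + μ {x + Pi.single i 1} = 1 / 2 ^ n) (x : Fin (n + 1) → ZMod 2) :
    μ {x} = 1 / 2 ^ (n + 1) := by
  have hreal := eq_one_div_two_pow_of_add_single (w := fun x => (μ {x}).toReal)
    (fun x => ENNReal.toReal_pos (hfull x).ne' (measure_ne_top μ _))
    (fun x i => by simpa [ENNReal.toReal_add] using congrArg ENNReal.toReal (hflip x i))
    (by
      conv_rhs => rw [← hbal, selfMedian_apply_singleton]
      rw [ENNReal.toReal_sum fun _ _ => by finiteness]
      simp only [ENNReal.toReal_mul])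
    x
  rw [← ENNReal.ofReal_toReal (measure_ne_top μ {x}), hreal]
  simp

theorem stmt18 (n : ℕ) (μ : Measure (Fin n → ZMod 2)) [IsProbabilityMeasure μ]
    (hbal : selfMedian maj3 μ = μ)
    (hfull : ∀ x : Fin n → ZMod 2, 0 < μ {x}) :
    ∀ x : Fin n → ZMod 2, μ {x} = 1 / 2 ^ n := by
  induction n with
  | zero =>
    intro x
    rw [Subsingleton.eq_univ_of_nonempty (Set.singleton_nonempty x), measure_univ]
    simp
  | succ n ih =>
    refine measure_singleton_eq_of_add_single μ hbal hfull fun x i => ?_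
    have hproj : Measurable (Fin.removeNth (α := fun _ => ZMod 2) i) := measurable_of_countable _
    have := Measure.isProbabilityMeasure_map (μ := μ) hproj.aemeasurable
    refine measure_add_single_eq_of_map_removeNth (ih _ ?_ fun y => ?_) x
    · rw [selfMedian_map (m := maj3) hproj (measurable_of_countable _) (measurable_of_countable _)
        (fun _ _ _ => rfl), hbal]
    · rw [Measure.map_apply hproj (measurableSet_singleton y)]
      refine (hfull (i.insertNth 0 y)).trans_le (measure_mono ?_)
      simp
end Sign
end

section
/- Let M be a second countable compact topological median algebra and let μ be a balanced probability measure on M. Then the topological support of μ is a closed median subalgebra of M: for all x, y, z in supp(μ), m(x,y,z) ∈ supp(μ). -/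
open MeasureTheory

/-- The topological support of a measure: points all of whose open neighborhoods
have positive measure. -/
def measSupport {M : Type*} [TopologicalSpace M] [MeasurableSpace M] (μ : Measure M) : Set M :=
  {x | ∀ U : Set M, IsOpen U → x ∈ U → 0 < μ U}

/-! Supports multiply under products and are mapped into the support under continuous
pushforwards, so `m` sends `supp μ ³ ⊆ supp (μ.prod (μ.prod μ))` into `supp (m_* μ³) = supp μ`. -/

theorem isClosed_measSupport {M : Type*} [TopologicalSpace M] [MeasurableSpace M]
    (μ : Measure M) : IsClosed (measSupport μ) := by
  refine isOpen_compl_iff.mp (isOpen_iff_forall_mem_open.mpr fun x hx => ?_)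
  obtain ⟨U, hU, hxU, hμU⟩ : ∃ U, IsOpen U ∧ x ∈ U ∧ μ U = 0 := by
    simpa [measSupport] using hx
  exact ⟨U, fun y hy hyU => (hyU U hU hy).ne' hμU, hU, hxU⟩

theorem mem_measSupport_prod {X Y : Type*} [TopologicalSpace X] [MeasurableSpace X]
    [TopologicalSpace Y] [MeasurableSpace Y] {μ : Measure X} {ν : Measure Y} [SFinite ν]
    {x : X} {y : Y} (hx : x ∈ measSupport μ) (hy : y ∈ measSupport ν) :
    (x, y) ∈ measSupport (μ.prod ν) := by
  intro W hW hxyW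
  obtain ⟨U, V, hU, hV, hxU, hyV, hUV⟩ := isOpen_prod_iff.mp hW x y hxyW
  calc 0 < μ U * ν V := ENNReal.mul_pos (hx U hU hxU).ne' (hy V hV hyV).ne' |>.bot_lt
    _ = μ.prod ν (U ×ˢ V) := (Measure.prod_prod U V).symm
    _ ≤ μ.prod ν W := measure_mono hUV

theorem mem_measSupport_map {X Y : Type*} [TopologicalSpace X] [MeasurableSpace X]
    [TopologicalSpace Y] [MeasurableSpace Y] {μ : Measure X} {f : X → Y}
    (hf : Continuous f) (hf_meas : AEMeasurable f μ) {x : X} (hx : x ∈ measSupport μ) :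
    f x ∈ measSupport (μ.map f) := fun O hO hfxO =>
  (hx _ (hO.preimage hf) hfxO).trans_le (Measure.le_map_apply hf_meas O)

theorem stmt19_general {M : Type*} [TopologicalSpace M]
    [SecondCountableTopology M] [MeasurableSpace M] [BorelSpace M]
    (m : M → M → M → M)
    (hcont : Continuous fun p : M × M × M => m p.1 p.2.1 p.2.2)
    (μ : Measure M) [IsProbabilityMeasure μ] (hbal : selfMedian m μ = μ) :
    IsClosed (measSupport μ) ∧
      ∀ x ∈ measSupport μ, ∀ y ∈ measSupport μ, ∀ z ∈ measSupport μ,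
        m x y z ∈ measSupport μ := by
  refine ⟨isClosed_measSupport μ, fun x hx y hy z hz => ?_⟩
  rw [← hbal]
  exact mem_measSupport_map hcont hcont.measurable.aemeasurable
    (mem_measSupport_prod hx (mem_measSupport_prod hy hz))

theorem stmt19 {M : Type*} [TopologicalSpace M] [T2Space M] [CompactSpace M]
    [SecondCountableTopology M] [MeasurableSpace M] [BorelSpace M]
    (m : M → M → M → M) (hm : IsMedian m)
    (hcont : Continuous fun p : M × M × M => m p.1 p.2.1 p.2.2)
    (μ : Measure M) [IsProbabilityMeasure μ] (hbal : selfMedian m μ = μ) :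
    IsClosed (measSupport μ) ∧
      ∀ x ∈ measSupport μ, ∀ y ∈ measSupport μ, ∀ z ∈ measSupport μ,
        m x y z ∈ measSupport μ :=
  stmt19_general m hcont μ hbal
end
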